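/- arXiv:1810.07067 — 2 statements merged into one kernel-verified Lean document; each statement's English description precedes it below -/
import Mathlib

section
/- Let χ > 1 be a real number and let m ≥ 1 be an integer. Then P_{m+1}(χ) = (4m/(2m+1))·χ·P_m(χ) − ((2m−1)/(2m+1))·P_{m−1}(χ). -/
open Real MeasureTheory

/-- `P χ m = ∫₀^{2π} cos(mφ)/√(χ − cos φ) dφ`. -/
noncomputable def P (χ : ℝ) (m : ℕ) : ℝ :=
  ∫ φ in (0:ℝ)..(2 * Real.pi), Real.cos (m * φ) / Real.sqrt (χ - Real.cos φ)

/-!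
Differentiate `F(φ) = sin(mφ) √(χ − cos φ)`. Writing `s = √(χ − cos φ)`, so that `s² = χ − cos φ`,
and expanding `cos((m ± 1)φ)`, one finds
`F' = (m χ cos(mφ) − (2m+1)/4 · cos((m+1)φ) − (2m−1)/4 · cos((m−1)φ)) / s`.
Since `F` vanishes at `0` and `2π`, the integral of `F'` over a period is zero, which is the
recurrence after dividing by `(2m+1)/4`.
-/

lemma sub_cos_pos {χ : ℝ} (hχ : 1 < χ) (φ : ℝ) : 0 < χ - cos φ := by
  linarith [cos_le_one φ]

lemma intervalIntegrable_cos_mul_div_sqrt_sub_cos {χ : ℝ} (hχ : 1 < χ) (μ a b : ℝ) :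
    IntervalIntegrable (fun φ => cos (μ * φ) / √(χ - cos φ)) volume a b := by
  refine Continuous.intervalIntegrable ?_ a b
  exact (by fun_prop : Continuous fun φ => cos (μ * φ)).div (by fun_prop)
    fun φ => (sqrt_pos.2 (sub_cos_pos hχ φ)).ne'

lemma hasDerivAt_sin_mul_mul_sqrt_sub_cos (μ χ φ : ℝ) (hφ : 0 < χ - cos φ) :
    HasDerivAt (fun ψ => sin (μ * ψ) * √(χ - cos ψ))
      (μ * χ * (cos (μ * φ) / √(χ - cos φ))
        - (2 * μ + 1) / 4 * (cos ((μ + 1) * φ) / √(χ - cos φ))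
        - (2 * μ - 1) / 4 * (cos ((μ - 1) * φ) / √(χ - cos φ))) φ := by
  have hsin : HasDerivAt (fun ψ => sin (μ * ψ)) (cos (μ * φ) * (μ * 1)) φ :=
    (hasDerivAt_sin (μ * φ)).comp φ ((hasDerivAt_id φ).const_mul μ)
  have hsqrt : HasDerivAt (fun ψ => √(χ - cos ψ)) ((0 - -sin φ) / (2 * √(χ - cos φ))) φ :=
    ((hasDerivAt_const φ χ).sub (hasDerivAt_cos φ)).sqrt hφ.ne'
  refine (hsin.mul hsqrt).congr_deriv ?_
  have hs : √(χ - cos φ) ≠ 0 := (sqrt_pos.2 hφ).ne'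
  have hss : √(χ - cos φ) * √(χ - cos φ) = χ - cos φ := mul_self_sqrt hφ.le
  rw [add_mul, sub_mul, one_mul, cos_add, cos_sub]
  field_simp
  linear_combination (8 * μ * cos (μ * φ)) * hss

lemma P_three_term_combination_eq_zero {χ : ℝ} (hχ : 1 < χ) {m : ℕ} (hm : 1 ≤ m) :
    m * χ * P χ m - (2 * m + 1) / 4 * P χ (m + 1) - (2 * m - 1) / 4 * P χ (m - 1) = 0 := by
  set I : ℝ → ℝ → ℝ := fun μ φ => cos (μ * φ) / √(χ - cos φ)
  have hI : ∀ μ, IntervalIntegrable (I μ) volume 0 (2 * π) := fun μ =>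
    intervalIntegrable_cos_mul_div_sqrt_sub_cos hχ μ 0 (2 * π)
  have hP : ∀ n : ℕ, P χ n = ∫ φ in (0:ℝ)..2 * π, I n φ := fun n => rfl
  have hFTC := intervalIntegral.integral_eq_sub_of_hasDerivAt
    (fun φ _ => hasDerivAt_sin_mul_mul_sqrt_sub_cos (m : ℝ) χ φ (sub_cos_pos hχ φ))
    ((((hI m).const_mul _).sub ((hI (m + 1)).const_mul _)).sub ((hI (m - 1)).const_mul _))
  have hsin : sin ((m : ℝ) * (2 * π)) = 0 := by
    rw [show (m : ℝ) * (2 * π) = ((2 * m : ℕ) : ℝ) * π by push_cast; ring]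
    exact sin_nat_mul_pi _
  rw [intervalIntegral.integral_sub (((hI m).const_mul _).sub ((hI (m + 1)).const_mul _))
      ((hI (m - 1)).const_mul _),
    intervalIntegral.integral_sub ((hI m).const_mul _) ((hI (m + 1)).const_mul _),
    intervalIntegral.integral_const_mul, intervalIntegral.integral_const_mul,
    intervalIntegral.integral_const_mul, hsin] at hFTC
  rw [hP, hP, hP, Nat.cast_succ, Nat.cast_sub hm, Nat.cast_one]
  simpa using hFTC

theorem stmt_0 (χ : ℝ) (hχ : 1 < χ) (m : ℕ) (hm : 1 ≤ m) :
    P χ (m + 1) = (4 * m / (2 * m + 1)) * χ * P χ m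
      - ((2 * m - 1) / (2 * m + 1)) * P χ (m - 1) := by
  have hcomb := P_three_term_combination_eq_zero hχ hm
  have hden : (2 * m + 1 : ℝ) ≠ 0 := by positivity
  field_simp
  linear_combination (-4 : ℝ) * hcomb
end

section
/- Let χ > 1 be a real number and let m ≥ 1 be an integer. Then S_m(χ) = ((1−2m)·χ·P_m(χ) − (1−2m)·P_{m−1}(χ))/(χ² − 1). -/
open Real MeasureTheory

/-- `S χ m = ∫₀^{2π} cos(mφ)/(χ − cos φ)^{3/2} dφ`. -/
noncomputable def S (χ : ℝ) (m : ℕ) : ℝ :=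
  ∫ φ in (0:ℝ)..(2 * Real.pi), Real.cos (m * φ) / (χ - Real.cos φ) ^ (3/2 : ℝ)

/-!
The function `F φ = (2 sin ((m - 1) φ) - 2 χ sin (m φ)) / √(χ - cos φ)` is `2π`-periodic,
and (using `cos ((m - 1) φ) = cos (m φ) cos φ + sin (m φ) sin φ`) its derivative is the
integrand of `(1 - 2m) χ P_m - (1 - 2m) P_{m-1} - (χ² - 1) S_m`. Integrating over a period
gives zero.
-/

lemma rpow_three_halves_eq_mul_sqrt {x : ℝ} (hx : 0 ≤ x) : x ^ (3 / 2 : ℝ) = x * √x := by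
  rw [show (3 / 2 : ℝ) = 1 + 1 / 2 by norm_num, rpow_add' hx (by norm_num), rpow_one,
    ← sqrt_eq_rpow]

lemma hasDerivAt_sin_comb_div_sqrt (a : ℝ) {χ φ : ℝ} (hφ : cos φ < χ) :
    HasDerivAt (fun φ => (-2 * χ * sin (a * φ) + 2 * sin ((a - 1) * φ)) / √(χ - cos φ))
      ((1 - 2 * a) * χ * (cos (a * φ) / √(χ - cos φ))
        - (1 - 2 * a) * (cos ((a - 1) * φ) / √(χ - cos φ))
        - (χ ^ 2 - 1) * (cos (a * φ) / (χ - cos φ) ^ (3 / 2 : ℝ))) φ := by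
  have hpos : 0 < χ - cos φ := sub_pos.2 hφ
  have hlin (b : ℝ) : HasDerivAt (fun φ => b * φ) b φ := by
    simpa using (hasDerivAt_id φ).const_mul b
  have hnum : HasDerivAt (fun φ => -2 * χ * sin (a * φ) + 2 * sin ((a - 1) * φ))
      (-2 * χ * (cos (a * φ) * a) + 2 * (cos ((a - 1) * φ) * (a - 1))) φ :=
    (((hlin a).sin).const_mul _).add (((hlin (a - 1)).sin).const_mul _)
  have hden : HasDerivAt (fun φ => √(χ - cos φ)) (sin φ / (2 * √(χ - cos φ))) φ := by
    simpa using ((hasDerivAt_cos φ).const_sub χ).sqrt hpos.ne'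
  refine (hnum.div hden (sqrt_pos.2 hpos).ne').congr_deriv ?_
  have hr : √(χ - cos φ) ^ 2 = χ - cos φ := sq_sqrt hpos.le
  have hcos : cos ((a - 1) * φ) = cos (a * φ) * cos φ + sin (a * φ) * sin φ := by
    rw [sub_one_mul, cos_sub]
  have hsin : sin ((a - 1) * φ) = sin (a * φ) * cos φ - cos (a * φ) * sin φ := by
    rw [sub_one_mul, sin_sub]
  rw [rpow_three_halves_eq_mul_sqrt hpos.le, hcos, hsin]
  field_simp
  rw [hr]
  linear_combination (χ - cos φ) * cos (a * φ) * sin_sq_add_cos_sq φ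

section
variable {χ : ℝ}

lemma continuous_cos_mul_div_sqrt (hχ : 1 < χ) (a : ℝ) :
    Continuous fun φ => cos (a * φ) / √(χ - cos φ) :=
  (continuous_cos.comp (continuous_const_mul a)).div
    (continuous_const.sub continuous_cos).sqrt
    fun φ => (sqrt_pos.2 (sub_pos.2 ((cos_le_one φ).trans_lt hχ))).ne'

lemma continuous_cos_mul_div_rpow (hχ : 1 < χ) (a p : ℝ) :
    Continuous fun φ => cos (a * φ) / (χ - cos φ) ^ p :=
  (continuous_cos.comp (continuous_const_mul a)).div
    ((continuous_const.sub continuous_cos).rpow_const fun φ =>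
      Or.inl (sub_pos.2 ((cos_le_one φ).trans_lt hχ)).ne')
    fun φ => (rpow_pos_of_pos (sub_pos.2 ((cos_le_one φ).trans_lt hχ)) p).ne'

lemma sin_int_mul_two_pi (n : ℤ) : sin (n * (2 * π)) = 0 := by
  simpa [mul_comm, mul_left_comm] using sin_int_mul_pi (2 * n)

lemma integral_cos_mul_div_rpow_three_halves (hχ : 1 < χ) (n : ℤ) :
    (χ ^ 2 - 1) * ∫ φ in 0..2 * π, cos (n * φ) / (χ - cos φ) ^ (3 / 2 : ℝ)
      = (1 - 2 * n) * χ * (∫ φ in 0..2 * π, cos (n * φ) / √(χ - cos φ))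
        - (1 - 2 * n) * ∫ φ in 0..2 * π, cos ((n - 1) * φ) / √(χ - cos φ) := by
  have hA (a c : ℝ) :=
    ((continuous_cos_mul_div_sqrt hχ a).intervalIntegrable (μ := volume) 0 (2 * π)).const_mul c
  have hB (c : ℝ) :=
    ((continuous_cos_mul_div_rpow hχ n (3 / 2)).intervalIntegrable (μ := volume) 0
      (2 * π)).const_mul c
  have hFTC := intervalIntegral.integral_eq_sub_of_hasDerivAt
    (fun φ _ => hasDerivAt_sin_comb_div_sqrt n ((cos_le_one φ).trans_lt hχ))
    (((hA n _).sub (hA (n - 1) _)).sub (hB _))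
  have hsin : sin ((n - 1) * (2 * π)) = 0 := by exact_mod_cast sin_int_mul_two_pi (n - 1)
  rw [intervalIntegral.integral_sub ((hA n _).sub (hA (n - 1) _)) (hB _),
    intervalIntegral.integral_sub (hA n _) (hA (n - 1) _), intervalIntegral.integral_const_mul,
    intervalIntegral.integral_const_mul, intervalIntegral.integral_const_mul] at hFTC
  simp only [hsin, sin_int_mul_two_pi, mul_zero, sin_zero, add_zero, zero_div, sub_zero] at hFTC
  linarith
end

theorem stmt_3 (χ : ℝ) (hχ : 1 < χ) (m : ℕ) (hm : 1 ≤ m) :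
    S χ m = ((1 - 2 * m) * χ * P χ m - (1 - 2 * m) * P χ (m - 1)) / (χ ^ 2 - 1) := by
  have hP : P χ (m - 1) = ∫ φ in 0..2 * π, cos ((m - 1) * φ) / √(χ - cos φ) := by
    rw [P, Nat.cast_sub hm, Nat.cast_one]
  have hχ2 : χ ^ 2 - 1 ≠ 0 := by nlinarith
  rw [eq_div_iff hχ2, hP, mul_comm, S, P]
  exact_mod_cast integral_cos_mul_div_rpow_three_halves hχ m
end
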